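/- Let (u, v, f, g) be a classical solution, smooth up to the boundary, of the MHD boundary layer system without viscosity on [0,T] × Ω, with boundary conditions v|_{y=0} = ∂_y f|_{y=0} = g|_{y=0} = 0. Then for all (t,x) ∈ [0,T] × 𝕋, ∂_y³ f(t,x,0) = 2 ∂_y u(t,x,0) ∂_x f(t,x,0) − f(t,x,0) ∂_x ∂_y u(t,x,0). -/

import Mathlib

open MeasureTheory Real Filter Set

noncomputable section

/-- Partial derivative in the first (tangential) variable. -/
def pdx (w : ℝ → ℝ → ℝ) : ℝ → ℝ → ℝ := fun x y => deriv (fun s => w s y) x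

/-- Partial derivative in the second (normal) variable. -/
def pdy (w : ℝ → ℝ → ℝ) : ℝ → ℝ → ℝ := fun x y => deriv (fun s => w x s) y

/-- Time derivative. -/
def pdt (w : ℝ → ℝ → ℝ → ℝ) : ℝ → ℝ → ℝ → ℝ := fun t x y => deriv (fun s => w s x y) t

/-- Japanese bracket ⟨y⟩ = (1+y²)^{1/2}. -/
def jap (y : ℝ) : ℝ := Real.sqrt (1 + y ^ 2)

/-- Weight by ⟨y⟩^a. -/
def wt (a : ℝ) (w : ℝ → ℝ → ℝ) : ℝ → ℝ → ℝ := fun x y => jap y ^ a * w x y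

/-- Squared L² norm on Ω = 𝕋 × ℝ₊ (the torus realized as (0, 2π]). -/
def sqL2 (w : ℝ → ℝ → ℝ) : ℝ :=
  ∫ x in Ioc (0:ℝ) (2 * π), ∫ y in Ioi (0:ℝ), (w x y) ^ 2

/-- Squared weighted Sobolev norm ‖·‖²_{H⁴_ℓ}. -/
def H4lSq (l : ℝ) (w : ℝ → ℝ → ℝ) : ℝ :=
  ∑ i ∈ Finset.range 5, ∑ j ∈ Finset.range 5,
    if i + j ≤ 4 then sqL2 (wt (l + j) (pdx^[i] (pdy^[j] w))) else 0

/-- Membership in the weighted space H⁴_ℓ(Ω). -/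
def MemH4l (l : ℝ) (w : ℝ → ℝ → ℝ) : Prop :=
  ∀ i j : ℕ, i + j ≤ 4 →
    IntegrableOn (fun p : ℝ × ℝ => (jap p.2 ^ (l + j) * pdx^[i] (pdy^[j] w) p.1 p.2) ^ 2)
      (Ioc (0:ℝ) (2 * π) ×ˢ Ioi (0:ℝ))

/-- The energy functional E(t). -/
def En (l : ℝ) (u f : ℝ → ℝ → ℝ → ℝ) (t : ℝ) : ℝ := H4lSq l (u t) + H4lSq l (f t)

/-- The dissipation functional D(t). -/
def Dn (l : ℝ) (f : ℝ → ℝ → ℝ → ℝ) (t : ℝ) : ℝ := H4lSq l (pdy (f t))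

/-- u, f belong to L^∞([0,T]; H⁴_ℓ). -/
def LinfH4 (l T : ℝ) (w : ℝ → ℝ → ℝ → ℝ) : Prop :=
  ∃ M : ℝ, ∀ t ∈ Icc (0:ℝ) T, MemH4l l (w t) ∧ H4lSq l (w t) ≤ M

/-- Solution of the 2D MHD boundary layer system without viscosity on [0,T],
with x-period 2π, on Ω = 𝕋 × ℝ₊. -/
structure IsSolution (T : ℝ) (u v f g : ℝ → ℝ → ℝ → ℝ) : Prop where
  reg_u : ContDiff ℝ 2 (fun p : ℝ × ℝ × ℝ => u p.1 p.2.1 p.2.2)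
  reg_v : ContDiff ℝ 2 (fun p : ℝ × ℝ × ℝ => v p.1 p.2.1 p.2.2)
  reg_f : ContDiff ℝ 2 (fun p : ℝ × ℝ × ℝ => f p.1 p.2.1 p.2.2)
  reg_g : ContDiff ℝ 2 (fun p : ℝ × ℝ × ℝ => g p.1 p.2.1 p.2.2)
  per_u : ∀ t x y, u t (x + 2 * π) y = u t x y
  per_v : ∀ t x y, v t (x + 2 * π) y = v t x y
  per_f : ∀ t x y, f t (x + 2 * π) y = f t x y
  per_g : ∀ t x y, g t (x + 2 * π) y = g t x y
  eqU : ∀ t ∈ Icc (0:ℝ) T, ∀ (x : ℝ), ∀ y ≥ (0:ℝ),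
    pdt u t x y + u t x y * pdx (u t) x y + v t x y * pdy (u t) x y
      - (f t x y * pdx (f t) x y + g t x y * pdy (f t) x y) = 0
  eqF : ∀ t ∈ Icc (0:ℝ) T, ∀ (x : ℝ), ∀ y ≥ (0:ℝ),
    pdt f t x y + u t x y * pdx (f t) x y + v t x y * pdy (f t) x y
      - pdy (pdy (f t)) x y
      - (f t x y * pdx (u t) x y + g t x y * pdy (u t) x y) = 0
  divU : ∀ t ∈ Icc (0:ℝ) T, ∀ (x : ℝ), ∀ y ≥ (0:ℝ), pdx (u t) x y + pdy (v t) x y = 0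
  divF : ∀ t ∈ Icc (0:ℝ) T, ∀ (x : ℝ), ∀ y ≥ (0:ℝ), pdx (f t) x y + pdy (g t) x y = 0
  bcV : ∀ t ∈ Icc (0:ℝ) T, ∀ x : ℝ, v t x 0 = 0
  bcF : ∀ t ∈ Icc (0:ℝ) T, ∀ x : ℝ, pdy (f t) x 0 = 0
  bcG : ∀ t ∈ Icc (0:ℝ) T, ∀ x : ℝ, g t x 0 = 0
  farU : ∀ t ∈ Icc (0:ℝ) T, ∀ x : ℝ, Tendsto (fun y => u t x y) atTop (nhds 0)
  farF : ∀ t ∈ Icc (0:ℝ) T, ∀ x : ℝ, Tendsto (fun y => f t x y) atTop (nhds 0)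

section BTDaux

/-- Directional derivative of a function on ℝ³. -/
def dd (e : ℝ×ℝ×ℝ) (H : ℝ×ℝ×ℝ → ℝ) : ℝ×ℝ×ℝ → ℝ := fun p => fderiv ℝ H p e

lemma sliceY_hasDeriv {H : ℝ×ℝ×ℝ → ℝ} (hH : Differentiable ℝ H) (t x y : ℝ) :
    HasDerivAt (fun r => H (t,x,r)) (dd (0,0,1) H (t,x,y)) y := by
  have hγ : HasDerivAt (fun r : ℝ => ((t,x,r) : ℝ×ℝ×ℝ)) ((0,0,1) : ℝ×ℝ×ℝ) y :=
    (hasDerivAt_const y t).prodMk ((hasDerivAt_const y x).prodMk (hasDerivAt_id y))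
  exact (hH (t,x,y)).hasFDerivAt.comp_hasDerivAt y hγ

lemma sliceX_hasDeriv {H : ℝ×ℝ×ℝ → ℝ} (hH : Differentiable ℝ H) (t x y : ℝ) :
    HasDerivAt (fun s => H (t,s,y)) (dd (0,1,0) H (t,x,y)) x := by
  have hγ : HasDerivAt (fun s : ℝ => ((t,s,y) : ℝ×ℝ×ℝ)) ((0,1,0) : ℝ×ℝ×ℝ) x :=
    (hasDerivAt_const x t).prodMk ((hasDerivAt_id x).prodMk (hasDerivAt_const x y))
  exact (hH (t,x,y)).hasFDerivAt.comp_hasDerivAt x hγ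

lemma sliceT_hasDeriv {H : ℝ×ℝ×ℝ → ℝ} (hH : Differentiable ℝ H) (t x y : ℝ) :
    HasDerivAt (fun s => H (s,x,y)) (dd (1,0,0) H (t,x,y)) t := by
  have hγ : HasDerivAt (fun s : ℝ => ((s,x,y) : ℝ×ℝ×ℝ)) ((1,0,0) : ℝ×ℝ×ℝ) t :=
    (hasDerivAt_id t).prodMk ((hasDerivAt_const t x).prodMk (hasDerivAt_const t y))
  exact (hH (t,x,y)).hasFDerivAt.comp_hasDerivAt t hγ

lemma contDiff_dd {H : ℝ×ℝ×ℝ → ℝ} (hH : ContDiff ℝ (⊤ : ℕ∞) H) (e : ℝ×ℝ×ℝ) :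
    ContDiff ℝ (⊤ : ℕ∞) (dd e H) := (hH.fderiv_right (by simp)).clm_apply contDiff_const

lemma dd_comm {H : ℝ×ℝ×ℝ → ℝ} (hH : ContDiff ℝ (⊤ : ℕ∞) H) (e₁ e₂ p : ℝ×ℝ×ℝ) :
    dd e₁ (dd e₂ H) p = dd e₂ (dd e₁ H) p := by
  have hd : Differentiable ℝ (fderiv ℝ H) := (hH.fderiv_right (m := 1) (by exact WithTop.coe_le_coe.mpr le_top)).differentiable one_ne_zero
  have hsym := second_derivative_symmetric
    (fun q => ((hH.differentiable (by simp)) q).hasFDerivAt) ((hd p).hasFDerivAt)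
  have key : ∀ a b : ℝ×ℝ×ℝ, dd a (dd b H) p = fderiv ℝ (fderiv ℝ H) p a b := by
    intro a b
    have h1 : fderiv ℝ (fun q => fderiv ℝ H q b) p =
        (fderiv ℝ (fderiv ℝ H) p).flip b := by
      rw [fderiv_clm_apply (hd p) (differentiableAt_const b)]
      simp
    show fderiv ℝ (fun q => fderiv ℝ H q b) p a = _
    rw [h1]
    simp
  rw [key, key, hsym e₁ e₂]

lemma deriv_zero_of_zeroOn {G : ℝ → ℝ} {s : Set ℝ} {a : ℝ}
    (hdiff : DifferentiableAt ℝ G a) (hs : UniqueDiffWithinAt ℝ s a)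
    (h0 : ∀ y ∈ s, G y = 0) (ha : a ∈ s) : deriv G a = 0 := by
  have h1 : derivWithin G s a = derivWithin (fun _ => (0:ℝ)) s a :=
    derivWithin_congr h0 (h0 a ha)
  have h2 : derivWithin (fun _ : ℝ => (0:ℝ)) s a = 0 := congrFun (derivWithin_const s (0:ℝ)) a
  rw [← hdiff.derivWithin hs, h1, h2]

/-- Core computation, stated for ambient functions on ℝ³. -/
lemma btd_aux (T t x : ℝ) (hT : 0 < T) (ht : t ∈ Icc (0:ℝ) T)
    (F U V G2 : ℝ×ℝ×ℝ → ℝ)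
    (hF : ContDiff ℝ (⊤ : ℕ∞) F) (hU : ContDiff ℝ (⊤ : ℕ∞) U) (hV : ContDiff ℝ (⊤ : ℕ∞) V) (hG : ContDiff ℝ (⊤ : ℕ∞) G2)
    (eqF : ∀ s ∈ Icc (0:ℝ) T, ∀ a : ℝ, ∀ b ≥ (0:ℝ),
      dd (1,0,0) F (s,a,b) + U (s,a,b) * dd (0,1,0) F (s,a,b)
        + V (s,a,b) * dd (0,0,1) F (s,a,b)
        - dd (0,0,1) (dd (0,0,1) F) (s,a,b)
        - (F (s,a,b) * dd (0,1,0) U (s,a,b) + G2 (s,a,b) * dd (0,0,1) U (s,a,b)) = 0)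
    (divF : dd (0,1,0) F (t,x,0) + dd (0,0,1) G2 (t,x,0) = 0)
    (bcF : ∀ s ∈ Icc (0:ℝ) T, ∀ a : ℝ, dd (0,0,1) F (s,a,0) = 0)
    (bcV : V (t,x,0) = 0) (bcG : G2 (t,x,0) = 0) :
    dd (0,0,1) (dd (0,0,1) (dd (0,0,1) F)) (t,x,0)
      = 2 * dd (0,0,1) U (t,x,0) * dd (0,1,0) F (t,x,0)
        - F (t,x,0) * dd (0,1,0) (dd (0,0,1) U) (t,x,0) := by
  have hFd : Differentiable ℝ F := hF.differentiable (by simp)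
  have hUd : Differentiable ℝ U := hU.differentiable (by simp)
  have hVd : Differentiable ℝ V := hV.differentiable (by simp)
  have hGd : Differentiable ℝ G2 := hG.differentiable (by simp)
  have hFy : ContDiff ℝ (⊤ : ℕ∞) (dd (0,0,1) F) := contDiff_dd hF _
  have hFx : ContDiff ℝ (⊤ : ℕ∞) (dd (0,1,0) F) := contDiff_dd hF _
  have hFt : ContDiff ℝ (⊤ : ℕ∞) (dd (1,0,0) F) := contDiff_dd hF _
  have hFyy : ContDiff ℝ (⊤ : ℕ∞) (dd (0,0,1) (dd (0,0,1) F)) := contDiff_dd hFy _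
  have hUx : ContDiff ℝ (⊤ : ℕ∞) (dd (0,1,0) U) := contDiff_dd hU _
  have hUy : ContDiff ℝ (⊤ : ℕ∞) (dd (0,0,1) U) := contDiff_dd hU _
  -- the equation as a function of the normal variable
  set A : ℝ → ℝ := fun r =>
    dd (1,0,0) F (t,x,r) + U (t,x,r) * dd (0,1,0) F (t,x,r)
      + V (t,x,r) * dd (0,0,1) F (t,x,r)
      - dd (0,0,1) (dd (0,0,1) F) (t,x,r)
      - (F (t,x,r) * dd (0,1,0) U (t,x,r) + G2 (t,x,r) * dd (0,0,1) U (t,x,r)) with hAdef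
  have hA0 : ∀ r ∈ Ici (0:ℝ), A r = 0 := fun r hr => eqF t ht x r hr
  have h1 := sliceY_hasDeriv (hFt.differentiable (by simp)) t x 0
  have h2 := sliceY_hasDeriv hUd t x 0
  have h3 := sliceY_hasDeriv (hFx.differentiable (by simp)) t x 0
  have h4 := sliceY_hasDeriv hVd t x 0
  have h5 := sliceY_hasDeriv (hFy.differentiable (by simp)) t x 0
  have h6 := sliceY_hasDeriv (hFyy.differentiable (by simp)) t x 0
  have h7 := sliceY_hasDeriv hFd t x 0
  have h8 := sliceY_hasDeriv (hUx.differentiable (by simp)) t x 0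
  have h9 := sliceY_hasDeriv hGd t x 0
  have h10 := sliceY_hasDeriv (hUy.differentiable (by simp)) t x 0
  have hA : HasDerivAt A
      (dd (0,0,1) (dd (1,0,0) F) (t,x,0)
        + (dd (0,0,1) U (t,x,0) * dd (0,1,0) F (t,x,0)
            + U (t,x,0) * dd (0,0,1) (dd (0,1,0) F) (t,x,0))
        + (dd (0,0,1) V (t,x,0) * dd (0,0,1) F (t,x,0)
            + V (t,x,0) * dd (0,0,1) (dd (0,0,1) F) (t,x,0))
        - dd (0,0,1) (dd (0,0,1) (dd (0,0,1) F)) (t,x,0)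
        - ((dd (0,0,1) F (t,x,0) * dd (0,1,0) U (t,x,0)
            + F (t,x,0) * dd (0,0,1) (dd (0,1,0) U) (t,x,0))
          + (dd (0,0,1) G2 (t,x,0) * dd (0,0,1) U (t,x,0)
            + G2 (t,x,0) * dd (0,0,1) (dd (0,0,1) U) (t,x,0)))) 0 :=
    (((h1.add (h2.mul h3)).add (h4.mul h5)).sub h6).sub ((h7.mul h8).add (h9.mul h10))
  have hD : deriv A 0 = 0 :=
    deriv_zero_of_zeroOn hA.differentiableAt (uniqueDiffOn_Ici 0 0 self_mem_Ici)
      hA0 self_mem_Ici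
  have hD0 := hA.deriv
  rw [hD] at hD0
  -- vanishing terms
  have z1 : dd (0,0,1) F (t,x,0) = 0 := bcF t ht x
  have z2 : dd (0,0,1) (dd (0,1,0) F) (t,x,0) = 0 := by
    rw [dd_comm hF]
    have hfun : (fun s => dd (0,0,1) F (t,s,0)) = fun _ => (0:ℝ) :=
      funext fun s => bcF t ht s
    have := (sliceX_hasDeriv (hFy.differentiable (by simp)) t x 0).deriv
    rw [← this, hfun, deriv_const]
  have z3 : dd (0,0,1) (dd (1,0,0) F) (t,x,0) = 0 := by
    rw [dd_comm hF]
    have := (sliceT_hasDeriv (hFy.differentiable (by simp)) t x 0).deriv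
    rw [← this]
    exact deriv_zero_of_zeroOn
      (sliceT_hasDeriv (hFy.differentiable (by simp)) t x 0).differentiableAt
      (uniqueDiffOn_Icc hT t ht) (fun s hs => bcF s hs x) ht
  have z4 : dd (0,0,1) G2 (t,x,0) = - dd (0,1,0) F (t,x,0) := by linarith
  have z5 : dd (0,0,1) (dd (0,1,0) U) (t,x,0) = dd (0,1,0) (dd (0,0,1) U) (t,x,0) :=
    dd_comm hU _ _ _
  rw [z1, z2, z3, z4, z5, bcV, bcG] at hD0
  linear_combination hD0

lemma pdx_eq (w : ℝ → ℝ → ℝ → ℝ)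
    (hw : Differentiable ℝ (fun p : ℝ×ℝ×ℝ => w p.1 p.2.1 p.2.2)) (s a b : ℝ) :
    pdx (w s) a b = dd (0,1,0) (fun p : ℝ×ℝ×ℝ => w p.1 p.2.1 p.2.2) (s,a,b) :=
  (sliceX_hasDeriv hw s a b).deriv

lemma pdy_eq (w : ℝ → ℝ → ℝ → ℝ)
    (hw : Differentiable ℝ (fun p : ℝ×ℝ×ℝ => w p.1 p.2.1 p.2.2)) (s a b : ℝ) :
    pdy (w s) a b = dd (0,0,1) (fun p : ℝ×ℝ×ℝ => w p.1 p.2.1 p.2.2) (s,a,b) :=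
  (sliceY_hasDeriv hw s a b).deriv

lemma pdt_eq (w : ℝ → ℝ → ℝ → ℝ)
    (hw : Differentiable ℝ (fun p : ℝ×ℝ×ℝ => w p.1 p.2.1 p.2.2)) (s a b : ℝ) :
    pdt w s a b = dd (1,0,0) (fun p : ℝ×ℝ×ℝ => w p.1 p.2.1 p.2.2) (s,a,b) :=
  (sliceT_hasDeriv hw s a b).deriv

lemma pdy_pdy_eq (w : ℝ → ℝ → ℝ → ℝ)
    (hw : ContDiff ℝ (⊤ : ℕ∞) (fun p : ℝ×ℝ×ℝ => w p.1 p.2.1 p.2.2)) (s a b : ℝ) :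
    pdy (pdy (w s)) a b
      = dd (0,0,1) (dd (0,0,1) (fun p : ℝ×ℝ×ℝ => w p.1 p.2.1 p.2.2)) (s,a,b) := by
  have h : (fun r => pdy (w s) a r)
      = fun r => dd (0,0,1) (fun p : ℝ×ℝ×ℝ => w p.1 p.2.1 p.2.2) (s,a,r) :=
    funext fun r => pdy_eq w (hw.differentiable (by simp)) s a r
  show deriv (fun r => pdy (w s) a r) b = _
  rw [h]
  exact (sliceY_hasDeriv ((contDiff_dd hw _).differentiable (by simp)) s a b).deriv

lemma pdx_pdy_eq (w : ℝ → ℝ → ℝ → ℝ)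
    (hw : ContDiff ℝ (⊤ : ℕ∞) (fun p : ℝ×ℝ×ℝ => w p.1 p.2.1 p.2.2)) (s a b : ℝ) :
    pdx (pdy (w s)) a b
      = dd (0,1,0) (dd (0,0,1) (fun p : ℝ×ℝ×ℝ => w p.1 p.2.1 p.2.2)) (s,a,b) := by
  have h : (fun r => pdy (w s) r b)
      = fun r => dd (0,0,1) (fun p : ℝ×ℝ×ℝ => w p.1 p.2.1 p.2.2) (s,r,b) :=
    funext fun r => pdy_eq w (hw.differentiable (by simp)) s r b
  show deriv (fun r => pdy (w s) r b) a = _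
  rw [h]
  exact (sliceX_hasDeriv ((contDiff_dd hw _).differentiable (by simp)) s a b).deriv

lemma pdy3_eq (w : ℝ → ℝ → ℝ → ℝ)
    (hw : ContDiff ℝ (⊤ : ℕ∞) (fun p : ℝ×ℝ×ℝ => w p.1 p.2.1 p.2.2)) (s a b : ℝ) :
    pdy^[3] (w s) a b
      = dd (0,0,1) (dd (0,0,1) (dd (0,0,1)
          (fun p : ℝ×ℝ×ℝ => w p.1 p.2.1 p.2.2))) (s,a,b) := by
  have h : (fun r => pdy (pdy (w s)) a r)
      = fun r => dd (0,0,1) (dd (0,0,1)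
          (fun p : ℝ×ℝ×ℝ => w p.1 p.2.1 p.2.2)) (s,a,r) :=
    funext fun r => pdy_pdy_eq w hw s a r
  show deriv (fun r => pdy (pdy (w s)) a r) b = _
  rw [h]
  exact (sliceY_hasDeriv
    ((contDiff_dd (contDiff_dd hw _) _).differentiable (by simp)) s a b).deriv

end BTDaux

/-- boundary identity ∂_y³f|_{y=0} = 2(∂_yu)(∂_xf)|_{y=0} − f ∂_x∂_yu|_{y=0}
for smooth classical solutions. -/
theorem boundary_third_derivative
    (T : ℝ) (hT : 0 < T) (u v f g : ℝ → ℝ → ℝ → ℝ)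
    (hsol : IsSolution T u v f g)
    (hu : ContDiff ℝ (⊤ : ℕ∞) (fun p : ℝ × ℝ × ℝ => u p.1 p.2.1 p.2.2))
    (hv : ContDiff ℝ (⊤ : ℕ∞) (fun p : ℝ × ℝ × ℝ => v p.1 p.2.1 p.2.2))
    (hf : ContDiff ℝ (⊤ : ℕ∞) (fun p : ℝ × ℝ × ℝ => f p.1 p.2.1 p.2.2))
    (hg : ContDiff ℝ (⊤ : ℕ∞) (fun p : ℝ × ℝ × ℝ => g p.1 p.2.1 p.2.2)) :
    ∀ t ∈ Icc (0:ℝ) T, ∀ x : ℝ,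
      pdy^[3] (f t) x 0
        = 2 * pdy (u t) x 0 * pdx (f t) x 0 - f t x 0 * pdx (pdy (u t)) x 0 := by
  intro t ht x
  have hfd : Differentiable ℝ (fun p : ℝ×ℝ×ℝ => f p.1 p.2.1 p.2.2) := hf.differentiable (by simp)
  have hud : Differentiable ℝ (fun p : ℝ×ℝ×ℝ => u p.1 p.2.1 p.2.2) := hu.differentiable (by simp)
  have hgd : Differentiable ℝ (fun p : ℝ×ℝ×ℝ => g p.1 p.2.1 p.2.2) := hg.differentiable (by simp)
  have key := btd_aux T t x hT ht
    (fun p : ℝ×ℝ×ℝ => f p.1 p.2.1 p.2.2) (fun p : ℝ×ℝ×ℝ => u p.1 p.2.1 p.2.2)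
    (fun p : ℝ×ℝ×ℝ => v p.1 p.2.1 p.2.2) (fun p : ℝ×ℝ×ℝ => g p.1 p.2.1 p.2.2)
    hf hu hv hg
    (by
      intro s hs a b hb
      have h := hsol.eqF s hs a b hb
      rw [pdt_eq f hfd, pdy_pdy_eq f hf, pdx_eq f hfd, pdy_eq f hfd,
        pdx_eq u hud, pdy_eq u hud] at h
      exact h)
    (by
      have h := hsol.divF t ht x 0 le_rfl
      rw [pdx_eq f hfd, pdy_eq g hgd] at h
      exact h)
    (by
      intro s hs a
      have h := hsol.bcF s hs a
      rw [pdy_eq f hfd] at h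
      exact h)
    (hsol.bcV t ht x) (hsol.bcG t ht x)
  rw [pdy3_eq f hf, pdx_pdy_eq u hu, pdy_eq u hud, pdx_eq f hfd]
  exact key
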